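/- arXiv:2602.05054 — 2 statements merged into one kernel-verified Lean document; each statement's English description precedes it below -/
import Mathlib

section
/- Let E : [0,τ] × V → ℝ be twice Gâteaux differentiable in the second variable on a Hilbert space V, with second derivative satisfying (δ²_φ E(t,·), ψ, ψ) ≥ c₁‖ψ‖² for all ψ ∈ V and t ∈ [0,τ]. Suppose u solves δ_φ E(0,u) = 0 and u^t solves δ_φ E(t,u^t) = 0, and that the mixed derivative satisfies |(δ_{t,φ} E(t,φ), ψ)| ≤ c₂‖φ‖‖ψ‖. Then ‖u^t − u‖ ≤ (c₂/c₁) t ‖u‖ for all t ∈ [0,τ]. -/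
open Set

/-- Stability of critical points of a family of uniformly convex energy functionals:
if the second Gâteaux derivative is uniformly coercive with constant `c₁` and the
mixed `t`-`φ` derivative of the first variation is bounded by `c₂ ‖φ‖ ‖ψ‖`, then
the critical points `uT t` of `E t` and `u` of `E 0` satisfy
`‖uT t − u‖ ≤ (c₂/c₁) t ‖u‖`. -/
theorem critical_point_stability
    {V : Type*} [NormedAddCommGroup V] [InnerProductSpace ℝ V] [CompleteSpace V]
    (τ c₁ c₂ : ℝ) (hτ : 0 < τ) (hc₁ : 0 < c₁) (hc₂ : 0 ≤ c₂)
    (E : ℝ → V → ℝ)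
    (DE : ℝ → V → V → ℝ)          -- first Gâteaux variation (δ_φ E)(t, φ)(ψ)
    (D2 : ℝ → V → V → V → ℝ)      -- second Gâteaux variation (δ²_φ E)(t, φ)(ψ₀, ψ)
    (DT : ℝ → V → V → ℝ)          -- mixed derivative (δ_{t,φ} E)(t, φ)(ψ)
    -- DE is the first Gâteaux derivative of E in the second variable:
    (hDE : ∀ t ∈ Icc (0:ℝ) τ, ∀ φ ψ : V,
      HasDerivAt (fun s : ℝ => E t (φ + s • ψ)) (DE t φ ψ) 0)
    -- D2 is the second Gâteaux derivative:
    (hD2 : ∀ t ∈ Icc (0:ℝ) τ, ∀ φ ψ₀ ψ : V,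
      HasDerivAt (fun s : ℝ => DE t (φ + s • ψ₀) ψ) (D2 t φ ψ₀ ψ) 0)
    -- uniform coercivity of the second derivative:
    (hcoer : ∀ t ∈ Icc (0:ℝ) τ, ∀ φ ψ : V, D2 t φ ψ ψ ≥ c₁ * ‖ψ‖ ^ 2)
    -- DT is the t-derivative of the first variation:
    (hDT : ∀ t ∈ Icc (0:ℝ) τ, ∀ φ ψ : V,
      HasDerivAt (fun s : ℝ => DE s φ ψ) (DT t φ ψ) t)
    -- bound on the mixed derivative:
    (hDTbound : ∀ t ∈ Icc (0:ℝ) τ, ∀ φ ψ : V, |DT t φ ψ| ≤ c₂ * ‖φ‖ * ‖ψ‖)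
    (u : V) (uT : ℝ → V)
    -- u is a critical point of E 0, uT t a critical point of E t:
    (hu : ∀ ψ : V, DE 0 u ψ = 0)
    (huT : ∀ t ∈ Icc (0:ℝ) τ, ∀ ψ : V, DE t (uT t) ψ = 0) :
    ∀ t ∈ Icc (0:ℝ) τ, ‖uT t - u‖ ≤ (c₂ / c₁) * t * ‖u‖ := by

  intro t ht
  obtain ⟨ht0, htτ⟩ := ht
  have hth : t ∈ Icc (0:ℝ) τ := ⟨ht0, htτ⟩
  set ψ := uT t - u with hψ
  -- derivative of g s = DE t (u + s • ψ) ψ at any s₀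
  have hg : ∀ s₀ : ℝ, HasDerivAt (fun s => DE t (u + s • ψ) ψ)
      (D2 t (u + s₀ • ψ) ψ ψ) s₀ := by
    intro s₀
    have h := hD2 t hth (u + s₀ • ψ) ψ ψ
    have h' : HasDerivAt (fun r : ℝ => DE t ((u + s₀ • ψ) + r • ψ) ψ)
        (D2 t (u + s₀ • ψ) ψ ψ) (s₀ - s₀) := by simpa using h
    have h2 := HasDerivAt.comp_sub_const s₀ s₀ h'
    have heq : (fun s : ℝ => DE t ((u + s₀ • ψ) + (s - s₀) • ψ) ψ)
        = fun s : ℝ => DE t (u + s • ψ) ψ := by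
      funext s
      congr 1
      rw [sub_smul]
      abel
    rw [heq] at h2
    exact h2
  -- MVT on [0,1]
  have hcont : ContinuousOn (fun s => DE t (u + s • ψ) ψ) (Icc (0:ℝ) 1) :=
    fun s _ => (hg s).continuousAt.continuousWithinAt
  obtain ⟨c, hc, hceq⟩ := exists_hasDerivAt_eq_slope (fun s => DE t (u + s • ψ) ψ)
    (fun s => D2 t (u + s • ψ) ψ ψ) one_pos hcont (fun s _ => hg s)
  have hg1 : DE t (u + (1:ℝ) • ψ) ψ = 0 := by
    rw [one_smul, hψ, add_sub_cancel]
    exact huT t hth ψ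
  have hg0 : DE t (u + (0:ℝ) • ψ) ψ = DE t u ψ := by rw [zero_smul, add_zero]
  have hkey : c₁ * ‖ψ‖ ^ 2 ≤ -(DE t u ψ) := by
    have := hcoer t hth (u + c • ψ) ψ
    rw [hceq, hg1, hg0] at this
    simpa using this
  -- bound |DE t u ψ|
  have hbd : |DE t u ψ| ≤ c₂ * ‖u‖ * ‖ψ‖ * t := by
    rcases eq_or_lt_of_le ht0 with h0 | h0
    · rw [← h0, hu ψ]
      simp
    · have hsub : Icc (0:ℝ) t ⊆ Icc (0:ℝ) τ := Icc_subset_Icc le_rfl htτ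
      have hcont2 : ContinuousOn (fun s => DE s u ψ) (Icc (0:ℝ) t) :=
        fun s hs => (hDT s (hsub hs) u ψ).continuousAt.continuousWithinAt
      obtain ⟨d, hd, hdeq⟩ := exists_hasDerivAt_eq_slope (fun s => DE s u ψ)
        (fun s => DT s u ψ) h0 hcont2
        (fun s hs => hDT s (hsub ⟨le_of_lt hs.1, le_of_lt hs.2⟩) u ψ)
      have hdmem : d ∈ Icc (0:ℝ) τ := hsub ⟨le_of_lt hd.1, le_of_lt hd.2⟩
      have hb := hDTbound d hdmem u ψ
      rw [hdeq] at hb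
      rw [hu ψ] at hb
      have ht' : (0:ℝ) < t := h0
      calc |DE t u ψ| = |(DE t u ψ - 0) / (t - 0)| * t := by
            rw [abs_div, sub_zero, sub_zero, abs_of_pos ht']
            field_simp
        _ ≤ c₂ * ‖u‖ * ‖ψ‖ * t := by
            apply mul_le_mul_of_nonneg_right _ (le_of_lt ht')
            simpa using hb
  -- conclude
  have h1 : c₁ * ‖ψ‖ ^ 2 ≤ c₂ * ‖u‖ * ‖ψ‖ * t :=
    le_trans hkey (le_trans (neg_le_abs _) hbd)
  rcases eq_or_lt_of_le (norm_nonneg ψ) with hz | hz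
  · rw [← hz]
    positivity
  · rw [div_mul_eq_mul_div, div_mul_eq_mul_div, le_div_iff₀ hc₁]
    nlinarith [hz]
end

section
/- Let f : ℝⁿ → ℝ be C¹ with L-Lipschitz gradient and bounded below by f*. Let x_{k+1} = x_k − α g_k, where g_k is a random vector with E[g_k | x_k] = ∇f(x_k) and E[‖g_k − ∇f(x_k)‖² | x_k] ≤ (ν_{IT}² + ν_{OT}²)‖∇f(x_k)‖². If α ≤ 1/((1 + ν_{IT}² + ν_{OT}²)L), then for every T ≥ 1, min_{0 ≤ k ≤ T−1} E[‖∇f(x_k)‖²] ≤ (2/(αT))(f(x₀) − f*). -/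
/-!
By the descent lemma `f y ≤ f x + ⟪∇f x, y - x⟫ + L/2 ‖y - x‖²`, one SGD step satisfies
`f x_{k+1} ≤ f x_k - α ⟪∇f x_k, g_k⟫ + L α²/2 ‖g_k‖²`. In expectation, unbiasedness and the
pull-out property of conditional expectation turn the cross term into `E‖∇f x_k‖²`, and the
variance bound gives `E‖g_k‖² ≤ (1 + ν_IT² + ν_OT²) E‖∇f x_k‖²`; the step-size condition then
yields `E f(x_{k+1}) ≤ E f(x_k) - α/2 E‖∇f x_k‖²`. Telescoping over `k < T` and using `f ≥ f*`
bounds the average, hence the minimum, of `E‖∇f x_k‖²` over `k < T`.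
-/

open MeasureTheory InnerProductSpace

theorem LipschitzWith.memLp_comp {Ω E F : Type*} [MeasurableSpace Ω] {μ : Measure Ω}
    [IsFiniteMeasure μ] [NormedAddCommGroup E] [NormedAddCommGroup F] {p : ENNReal}
    {K : NNReal} {φ : E → F} (hφ : LipschitzWith K φ) {X : Ω → E} (hX : MemLp X p μ) :
    MemLp (fun ω ↦ φ (X ω)) p μ := by
  have h := (hφ.sub (LipschitzWith.const (φ 0))).comp_memLp (by simp) hX
  convert h.add (memLp_const (φ 0)) using 1
  ext ω
  simp

section Moments

variable {Ω E : Type*} [NormedAddCommGroup E] [InnerProductSpace ℝ E]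
  {m m₀ : MeasurableSpace Ω} {μ : Measure Ω}

theorem MeasureTheory.MemLp.integrable_inner {u v : Ω → E} (hu : MemLp u 2 μ)
    (hv : MemLp v 2 μ) : Integrable (fun ω ↦ ⟪u ω, v ω⟫_ℝ) μ :=
  memLp_one_iff_integrable.mp ((innerSL ℝ).memLp_of_bilin 1 hu hv)

variable [CompleteSpace E]

theorem integral_inner_condExp (hm : m ≤ m₀) [SigmaFinite (μ.trim hm)]
    {u g : Ω → E} (hu : AEStronglyMeasurable[m] u μ)
    (hug : Integrable (fun ω ↦ ⟪u ω, g ω⟫_ℝ) μ) (hg : Integrable g μ) :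
    ∫ ω, ⟪u ω, (μ[g | m]) ω⟫_ℝ ∂μ = ∫ ω, ⟪u ω, g ω⟫_ℝ ∂μ := by
  rw [← integral_condExp hm (f := fun ω ↦ ⟪u ω, g ω⟫_ℝ)]
  exact integral_congr_ae (condExp_bilin_of_aestronglyMeasurable_left (innerSL ℝ) hu hug hg).symm

variable [IsFiniteMeasure μ] {g h : Ω → E}

theorem integral_inner_eq_integral_norm_sq_of_condExp_ae_eq (hm : m ≤ m₀)
    (hh : AEStronglyMeasurable[m] h μ) (hh₂ : MemLp h 2 μ) (hg₂ : MemLp g 2 μ)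
    (hgh : μ[g | m] =ᵐ[μ] h) :
    ∫ ω, ⟪h ω, g ω⟫_ℝ ∂μ = ∫ ω, ‖h ω‖ ^ 2 ∂μ := by
  rw [← integral_inner_condExp hm hh (hh₂.integrable_inner hg₂) (hg₂.integrable one_le_two)]
  refine integral_congr_ae ?_
  filter_upwards [hgh] with ω hω
  rw [hω, real_inner_self_eq_norm_sq]

theorem integral_norm_sq_le_of_condExp_ae_eq (hm : m ≤ m₀)
    (hh : AEStronglyMeasurable[m] h μ) (hh₂ : MemLp h 2 μ) (hg₂ : MemLp g 2 μ)
    (hgh : μ[g | m] =ᵐ[μ] h) {σ : ℝ}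
    (hvar : ∀ᵐ ω ∂μ, (μ[fun ω ↦ ‖g ω - h ω‖ ^ 2 | m]) ω ≤ σ * ‖h ω‖ ^ 2) :
    ∫ ω, ‖g ω‖ ^ 2 ∂μ ≤ (1 + σ) * ∫ ω, ‖h ω‖ ^ 2 ∂μ := by
  have hg_sq := hg₂.norm.integrable_sq
  have hh_sq := hh₂.norm.integrable_sq
  have hhg := (hh₂.integrable_inner hg₂).const_mul 2
  have hdiff : Integrable (fun ω ↦ ‖g ω‖ ^ 2 - 2 * ⟪h ω, g ω⟫_ℝ) μ := hg_sq.sub hhg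
  have hvar_int : ∫ ω, ‖g ω - h ω‖ ^ 2 ∂μ ≤ σ * ∫ ω, ‖h ω‖ ^ 2 ∂μ := calc
    _ = ∫ ω, (μ[fun ω ↦ ‖g ω - h ω‖ ^ 2 | m]) ω ∂μ := (integral_condExp hm).symm
    _ ≤ ∫ ω, σ * ‖h ω‖ ^ 2 ∂μ := integral_mono_ae integrable_condExp (hh_sq.const_mul σ) hvar
    _ = σ * ∫ ω, ‖h ω‖ ^ 2 ∂μ := integral_const_mul σ _
  have hexpand : ∫ ω, ‖g ω - h ω‖ ^ 2 ∂μ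
      = ∫ ω, ‖g ω‖ ^ 2 ∂μ - 2 * ∫ ω, ⟪h ω, g ω⟫_ℝ ∂μ + ∫ ω, ‖h ω‖ ^ 2 ∂μ := calc
    _ = ∫ ω, (‖g ω‖ ^ 2 - 2 * ⟪h ω, g ω⟫_ℝ + ‖h ω‖ ^ 2) ∂μ := by
      congr 1 with ω
      rw [norm_sub_sq_real, real_inner_comm]
    _ = _ := by
      rw [integral_add hdiff hh_sq, integral_sub hg_sq hhg, integral_const_mul]
  rw [integral_inner_eq_integral_norm_sq_of_condExp_ae_eq hm hh hh₂ hg₂ hgh] at hexpand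
  linarith

end Moments

section Descent

variable {Ω E : Type*} [MeasurableSpace Ω] {μ : Measure Ω}
  [NormedAddCommGroup E] [InnerProductSpace ℝ E] [CompleteSpace E] {f : E → ℝ} {L : NNReal}

theorem Differentiable.le_add_inner_gradient_add_sq (hf : Differentiable ℝ f)
    (hlip : LipschitzWith L (gradient f)) (x y : E) :
    f y ≤ f x + ⟪gradient f x, y - x⟫_ℝ + L / 2 * ‖y - x‖ ^ 2 := by
  set v := y - x
  let ψ : ℝ → ℝ := fun t ↦ f (x + t • v) - t * ⟪gradient f x, v⟫_ℝ - L / 2 * ‖v‖ ^ 2 * t ^ 2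
  have hψ : ∀ t, HasDerivAt ψ
      (⟪gradient f (x + t • v), v⟫_ℝ - ⟪gradient f x, v⟫_ℝ - L * ‖v‖ ^ 2 * t) t := by
    intro t
    have hline : HasDerivAt (fun t : ℝ ↦ x + t • v) v t := by
      simpa using ((hasDerivAt_id t).smul_const v).const_add x
    have hcomp := (hf (x + t • v)).hasGradientAt.hasFDerivAt.comp_hasDerivAt t hline
    rw [toDual_apply_apply] at hcomp
    refine ((hcomp.sub ((hasDerivAt_id t).mul_const ⟪gradient f x, v⟫_ℝ)).sub
      ((hasDerivAt_pow 2 t).const_mul (L / 2 * ‖v‖ ^ 2))).congr_deriv ?_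
    simp only [one_mul, Nat.cast_ofNat]
    ring
  have hψ' : ∀ t ∈ interior (Set.Icc (0 : ℝ) 1),
      ⟪gradient f (x + t • v), v⟫_ℝ - ⟪gradient f x, v⟫_ℝ - L * ‖v‖ ^ 2 * t ≤ 0 := by
    intro t ht
    rw [interior_Icc] at ht
    rw [sub_nonpos]
    have hgrad : ‖gradient f (x + t • v) - gradient f x‖ ≤ L * (t * ‖v‖) := by
      simpa [norm_smul, abs_of_pos ht.1] using hlip.norm_sub_le (x + t • v) x
    calc ⟪gradient f (x + t • v), v⟫_ℝ - ⟪gradient f x, v⟫_ℝ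
        = ⟪gradient f (x + t • v) - gradient f x, v⟫_ℝ := (inner_sub_left ..).symm
      _ ≤ ‖gradient f (x + t • v) - gradient f x‖ * ‖v‖ := real_inner_le_norm ..
      _ ≤ L * (t * ‖v‖) * ‖v‖ := by gcongr
      _ = L * ‖v‖ ^ 2 * t := by ring
  have hanti : AntitoneOn ψ (Set.Icc 0 1) :=
    antitoneOn_of_hasDerivWithinAt_nonpos (convex_Icc 0 1)
      (fun t _ ↦ (hψ t).continuousAt.continuousWithinAt)
      (fun t _ ↦ (hψ t).hasDerivWithinAt) hψ'
  have hψ1 : ψ 1 = f y - ⟪gradient f x, y - x⟫_ℝ - L / 2 * ‖y - x‖ ^ 2 := by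
    simp only [ψ, v, one_smul, add_sub_cancel, one_mul, one_pow, mul_one]
  have hψ0 : ψ 0 = f x := by simp [ψ]
  have hψ10 := hanti (by simp) (by simp) zero_le_one
  linarith

theorem Differentiable.integrable_comp_of_lipschitzWith_gradient [IsFiniteMeasure μ]
    (hf : Differentiable ℝ f) (hlip : LipschitzWith L (gradient f)) {c : ℝ}
    (hbelow : ∀ z, c ≤ f z) {X : Ω → E} (hX : MemLp X 2 μ) : Integrable (fun ω ↦ f (X ω)) μ := by
  refine integrable_of_le_of_le (hf.continuous.comp_aestronglyMeasurable hX.1)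
    (ae_of_all _ fun ω ↦ hbelow (X ω)) (ae_of_all _ fun ω ↦ ?_) (integrable_const c)
    (((integrable_const (f 0)).add ((hX.integrable one_le_two).const_inner (gradient f 0))).add
      (hX.norm.integrable_sq.const_mul (L / 2)))
  simpa using hf.le_add_inner_gradient_add_sq hlip 0 (X ω)

theorem integral_comp_sub_smul_le (hf : Differentiable ℝ f)
    (hlip : LipschitzWith L (gradient f)) {X G : Ω → E} {α σ : ℝ}
    (hα : 0 ≤ α) (hstep : α * ((1 + σ) * L) ≤ 1)
    (hfX : Integrable (fun ω ↦ f (X ω)) μ) (hfX' : Integrable (fun ω ↦ f (X ω - α • G ω)) μ)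
    (hgrad : MemLp (fun ω ↦ gradient f (X ω)) 2 μ) (hG : MemLp G 2 μ)
    (hcross : ∫ ω, ⟪gradient f (X ω), G ω⟫_ℝ ∂μ = ∫ ω, ‖gradient f (X ω)‖ ^ 2 ∂μ)
    (hsecond : ∫ ω, ‖G ω‖ ^ 2 ∂μ ≤ (1 + σ) * ∫ ω, ‖gradient f (X ω)‖ ^ 2 ∂μ) :
    ∫ ω, f (X ω - α • G ω) ∂μ ≤ ∫ ω, f (X ω) ∂μ - α / 2 * ∫ ω, ‖gradient f (X ω)‖ ^ 2 ∂μ := by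
  have hpoint : ∀ ω, f (X ω - α • G ω)
      ≤ f (X ω) - α * ⟪gradient f (X ω), G ω⟫_ℝ + L * α ^ 2 / 2 * ‖G ω‖ ^ 2 := by
    intro ω
    have h := hf.le_add_inner_gradient_add_sq hlip (X ω) (X ω - α • G ω)
    rw [sub_sub_cancel_left, inner_neg_right, real_inner_smul_right, norm_neg, norm_smul,
      Real.norm_eq_abs, mul_pow, sq_abs] at h
    linarith
  have hinner := (hgrad.integrable_inner hG).const_mul α
  have hG_sq := hG.norm.integrable_sq.const_mul (L * α ^ 2 / 2)
  have hlin : Integrable (fun ω ↦ f (X ω) - α * ⟪gradient f (X ω), G ω⟫_ℝ) μ := hfX.sub hinner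
  have hP : 0 ≤ ∫ ω, ‖gradient f (X ω)‖ ^ 2 ∂μ := integral_nonneg fun ω ↦ sq_nonneg _
  calc ∫ ω, f (X ω - α • G ω) ∂μ
      ≤ ∫ ω, (f (X ω) - α * ⟪gradient f (X ω), G ω⟫_ℝ + L * α ^ 2 / 2 * ‖G ω‖ ^ 2) ∂μ :=
        integral_mono hfX' (hlin.add hG_sq) hpoint
    _ = ∫ ω, f (X ω) ∂μ - α * ∫ ω, ‖gradient f (X ω)‖ ^ 2 ∂μ
          + L * α ^ 2 / 2 * ∫ ω, ‖G ω‖ ^ 2 ∂μ := by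
        rw [integral_add hlin hG_sq, integral_sub hfX hinner, integral_const_mul,
          integral_const_mul, hcross]
    _ ≤ _ := by
        have h₁ := mul_le_mul_of_nonneg_left hsecond (by positivity : (0 : ℝ) ≤ L * α ^ 2 / 2)
        have h₂ := mul_le_mul_of_nonneg_right hstep (mul_nonneg hα hP)
        linarith

end Descent

theorem exists_lt_le_div_of_le_sub {F a : ℕ → ℝ} {c b : ℝ} (hc : 0 < c)
    (hdesc : ∀ k, F (k + 1) ≤ F k - c * a k) (hb : ∀ k, b ≤ F k) {T : ℕ} (hT : 0 < T) :
    ∃ k < T, a k ≤ (F 0 - b) / (c * T) := by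
  have hsum : c * ∑ k ∈ Finset.range T, a k ≤ F 0 - b := by
    rw [Finset.mul_sum]
    calc ∑ k ∈ Finset.range T, c * a k ≤ ∑ k ∈ Finset.range T, (F k - F (k + 1)) :=
          Finset.sum_le_sum fun k _ ↦ by linarith [hdesc k]
      _ = F 0 - F T := Finset.sum_range_sub' F T
      _ ≤ F 0 - b := by linarith [hb T]
  have hT' : (0 : ℝ) < T := by exact_mod_cast hT
  have hsum' : ∑ k ∈ Finset.range T, a k ≤ ∑ _k ∈ Finset.range T, (F 0 - b) / (c * T) := by
    rw [Finset.sum_const, Finset.card_range, nsmul_eq_mul, mul_div_assoc',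
      le_div_iff₀ (by positivity)]
    linarith [mul_le_mul_of_nonneg_left hsum hT'.le]
  obtain ⟨k, hk, hle⟩ := Finset.exists_le_of_sum_le (Finset.nonempty_range_iff.mpr hT.ne') hsum'
  exact ⟨k, Finset.mem_range.mp hk, hle⟩

theorem sgd_min_gradient_bound_general
    {n : ℕ} {Ω : Type*} [MeasurableSpace Ω] (μ : Measure Ω) [IsProbabilityMeasure μ]
    (f : EuclideanSpace ℝ (Fin n) → ℝ) (fstar : ℝ) (L : NNReal)
    (hf : ContDiff ℝ 1 f)
    (hlip : LipschitzWith L (gradient f))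
    (hbelow : ∀ z, fstar ≤ f z)
    (νIT νOT α : ℝ) (hα : 0 < α)
    (hstep : α ≤ 1 / ((1 + νIT ^ 2 + νOT ^ 2) * (L : ℝ)))
    (x g : ℕ → Ω → EuclideanSpace ℝ (Fin n)) (x0 : EuclideanSpace ℝ (Fin n))
    (hx0 : ∀ ω, x 0 ω = x0)
    (hupdate : ∀ k ω, x (k + 1) ω = x k ω - α • g k ω)
    (hxmeas : ∀ k, Measurable (x k))
    (hgL2 : ∀ k, MemLp (g k) 2 μ)
    -- conditional unbiasedness: E[g_k | x_k] = ∇f(x_k)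
    (hunbiased : ∀ k,
      μ[g k | MeasurableSpace.comap (x k) inferInstance]
        =ᵐ[μ] fun ω => gradient f (x k ω))
    -- conditional variance bound: E[‖g_k − ∇f(x_k)‖² | x_k] ≤ (ν_IT² + ν_OT²)‖∇f(x_k)‖²
    (hvariance : ∀ k, ∀ᵐ ω ∂μ,
      (μ[(fun ω' => ‖g k ω' - gradient f (x k ω')‖ ^ 2) |
          MeasurableSpace.comap (x k) inferInstance]) ω
        ≤ (νIT ^ 2 + νOT ^ 2) * ‖gradient f (x k ω)‖ ^ 2) :
    ∀ T : ℕ, 1 ≤ T → ∃ k < T,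
      ∫ ω, ‖gradient f (x k ω)‖ ^ 2 ∂μ ≤ 2 / (α * T) * (f x0 - fstar) := by
  intro T hT
  have hf' : Differentiable ℝ f := hf.differentiable one_ne_zero
  have hstep' : α * ((1 + (νIT ^ 2 + νOT ^ 2)) * L) ≤ 1 :=
    mul_le_of_le_div₀ zero_le_one (by positivity) (by rwa [← add_assoc])
  have hx : ∀ k, MemLp (x k) 2 μ := by
    intro k
    induction k with
    | zero => simpa only [funext hx0] using memLp_const x0
    | succ k ih =>
      rw [show x (k + 1) = x k - α • g k from funext (hupdate k)]
      exact ih.sub ((hgL2 k).const_smul α)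
  have hfx k := hf'.integrable_comp_of_lipschitzWith_gradient hlip hbelow (hx k)
  have hdesc : ∀ k, ∫ ω, f (x (k + 1) ω) ∂μ
      ≤ ∫ ω, f (x k ω) ∂μ - α / 2 * ∫ ω, ‖gradient f (x k ω)‖ ^ 2 ∂μ := by
    intro k
    have hm := (hxmeas k).comap_le
    have hgrad_m : AEStronglyMeasurable[MeasurableSpace.comap (x k) inferInstance]
        (fun ω ↦ gradient f (x k ω)) μ :=
      (hlip.continuous.measurable.comp (comap_measurable (x k))).aestronglyMeasurable
    have hgrad := hlip.memLp_comp (hx k)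
    have hfx' := hfx (k + 1)
    simp only [hupdate k] at hfx' ⊢
    exact integral_comp_sub_smul_le hf' hlip hα.le hstep' (hfx k) hfx' hgrad (hgL2 k)
      (integral_inner_eq_integral_norm_sq_of_condExp_ae_eq hm hgrad_m hgrad (hgL2 k)
        (hunbiased k))
      (integral_norm_sq_le_of_condExp_ae_eq hm hgrad_m hgrad (hgL2 k) (hunbiased k)
        (hvariance k))
  obtain ⟨k, hk, hle⟩ := exists_lt_le_div_of_le_sub (half_pos hα) hdesc
    (fun k ↦ by simpa using integral_mono (integrable_const fstar) (hfx k) fun ω ↦ hbelow _) hT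
  refine ⟨k, hk, hle.trans_eq ?_⟩
  simp only [hx0, integral_const, probReal_univ, one_smul]
  field_simp

/-- Convergence of stochastic gradient descent under the augmented inner product
test: with conditionally unbiased gradient estimates whose conditional variance is
bounded by `(ν_IT² + ν_OT²)‖∇f(x_k)‖²`, and step length
`α ≤ 1/((1 + ν_IT² + ν_OT²) L)`, one has
`min_{0 ≤ k ≤ T−1} E[‖∇f(x_k)‖²] ≤ (2/(αT)) (f(x₀) − f*)`. -/
theorem sgd_min_gradient_bound
    {n : ℕ} {Ω : Type*} [MeasurableSpace Ω] (μ : Measure Ω) [IsProbabilityMeasure μ]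
    (f : EuclideanSpace ℝ (Fin n) → ℝ) (fstar : ℝ) (L : NNReal) (hL : 0 < (L : ℝ))
    (hf : ContDiff ℝ 1 f)
    (hlip : LipschitzWith L (gradient f))
    (hbelow : ∀ z, fstar ≤ f z)
    (νIT νOT α : ℝ) (hνIT : 0 < νIT) (hνOT : 0 < νOT) (hα : 0 < α)
    (hstep : α ≤ 1 / ((1 + νIT ^ 2 + νOT ^ 2) * (L : ℝ)))
    (x g : ℕ → Ω → EuclideanSpace ℝ (Fin n)) (x0 : EuclideanSpace ℝ (Fin n))
    (hx0 : ∀ ω, x 0 ω = x0)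
    (hupdate : ∀ k ω, x (k + 1) ω = x k ω - α • g k ω)
    (hxmeas : ∀ k, Measurable (x k)) (hgmeas : ∀ k, Measurable (g k))
    (hgL2 : ∀ k, MemLp (g k) 2 μ)
    -- conditional unbiasedness: E[g_k | x_k] = ∇f(x_k)
    (hunbiased : ∀ k,
      μ[g k | MeasurableSpace.comap (x k) inferInstance]
        =ᵐ[μ] fun ω => gradient f (x k ω))
    -- conditional variance bound: E[‖g_k − ∇f(x_k)‖² | x_k] ≤ (ν_IT² + ν_OT²)‖∇f(x_k)‖²
    (hvariance : ∀ k, ∀ᵐ ω ∂μ,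
      (μ[(fun ω' => ‖g k ω' - gradient f (x k ω')‖ ^ 2) |
          MeasurableSpace.comap (x k) inferInstance]) ω
        ≤ (νIT ^ 2 + νOT ^ 2) * ‖gradient f (x k ω)‖ ^ 2) :
    ∀ T : ℕ, 1 ≤ T → ∃ k < T,
      ∫ ω, ‖gradient f (x k ω)‖ ^ 2 ∂μ ≤ 2 / (α * T) * (f x0 - fstar) :=
  sgd_min_gradient_bound_general μ f fstar L hf hlip hbelow νIT νOT α hα hstep x g x0 hx0 hupdate
    hxmeas hgL2 hunbiased hvariance
end
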